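/- arXiv:1411.6081 — 2 statements merged into one kernel-verified Lean document; each statement's English description precedes it below -/
import Mathlib

section
/- Let M ∈ [0,1]^{m×n} and ρ ∈ [0,1). Suppose the random binary matrix A has independent entries with P(A_{ij}=1) = (1-ρ)M_{ij} and P(A_{ij}=0) = 1-(1-ρ)M_{ij}, and let Y have independent entries with P(Y_{ij}=1)=M_{ij} coupled so that A_{ij}=1 implies Y_{ij}=1. Define the shifted loss ℓ̃(x,1) = ((x-1)^2 - ρx^2)/(1-ρ) and ℓ̃(x,0) = x^2. Then for any fixed matrix X ∈ ℝ^{m×n}, E[Σ_{i,j} (X_{ij} - Y_{ij})^2] = E[Σ_{i,j} ℓ̃(X_{ij}, A_{ij})]. -/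
open MeasureTheory

/-! Both sides are sums of functions of {0,1}-valued variables, and the expectation of `h ∘ f`
for such an `f` depends only on `P(f = 1)`. The coupling of `A` and `Y` is therefore irrelevant:
entrywise, `P(A = 1) = (1 - ρ) P(Y = 1)` and the shift in `ℓ̃(x, 1)` is exactly what compensates
the lost mass. -/

/-- The shifted loss ℓ̃: ℓ̃(x,1) = ((x-1)² - ρx²)/(1-ρ) and ℓ̃(x,0) = x². -/
noncomputable def shiftedLoss (ρ x a : ℝ) : ℝ :=
  if a = 1 then ((x - 1) ^ 2 - ρ * x ^ 2) / (1 - ρ) else x ^ 2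

lemma apply_eq_add_mul_of_eq_zero_or_eq_one (h : ℝ → ℝ) {x : ℝ} (hx : x = 0 ∨ x = 1) :
    h x = h 0 + (h 1 - h 0) * x := by
  rcases hx with rfl | rfl <;> ring

lemma eq_indicator_of_eq_zero_or_eq_one {Ω : Type*} {f : Ω → ℝ}
    (h01 : ∀ ω, f ω = 0 ∨ f ω = 1) :
    f = {ω | f ω = 1}.indicator 1 := by
  funext ω
  rcases h01 ω with h | h <;> simp [Set.indicator, h]

section ZeroOneValued

variable {Ω : Type*} [MeasurableSpace Ω] {μ : Measure Ω} {f : Ω → ℝ}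

lemma integral_of_eq_zero_or_eq_one (hf : Measurable f) (h01 : ∀ ω, f ω = 0 ∨ f ω = 1)
    {p : ℝ} (hp : 0 ≤ p) (hμ : μ {ω | f ω = 1} = ENNReal.ofReal p) :
    ∫ ω, f ω ∂μ = p := by
  have hs : MeasurableSet {ω | f ω = 1} := hf (measurableSet_singleton 1)
  rw [eq_indicator_of_eq_zero_or_eq_one h01, Pi.one_def,
    integral_indicator_const 1 hs, measureReal_def, hμ,
    ENNReal.toReal_ofReal hp, smul_eq_mul, mul_one]

lemma integrable_of_eq_zero_or_eq_one [IsFiniteMeasure μ] (hf : Measurable f)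
    (h01 : ∀ ω, f ω = 0 ∨ f ω = 1) : Integrable f μ := by
  rw [eq_indicator_of_eq_zero_or_eq_one h01]
  exact (integrable_const 1).indicator (hf (measurableSet_singleton 1))

lemma integrable_comp_of_eq_zero_or_eq_one [IsFiniteMeasure μ] (hf : Measurable f)
    (h01 : ∀ ω, f ω = 0 ∨ f ω = 1) (h : ℝ → ℝ) : Integrable (fun ω => h (f ω)) μ := by
  simp_rw [apply_eq_add_mul_of_eq_zero_or_eq_one h (h01 _)]
  exact (integrable_const _).add ((integrable_of_eq_zero_or_eq_one hf h01).const_mul _)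

lemma integral_comp_of_eq_zero_or_eq_one [IsProbabilityMeasure μ] (hf : Measurable f)
    (h01 : ∀ ω, f ω = 0 ∨ f ω = 1) {p : ℝ} (hp : 0 ≤ p)
    (hμ : μ {ω | f ω = 1} = ENNReal.ofReal p) (h : ℝ → ℝ) :
    ∫ ω, h (f ω) ∂μ = (1 - p) * h 0 + p * h 1 := by
  simp_rw [apply_eq_add_mul_of_eq_zero_or_eq_one h (h01 _)]
  rw [integral_add (integrable_const _) ((integrable_of_eq_zero_or_eq_one hf h01).const_mul _),
    integral_const_mul, integral_of_eq_zero_or_eq_one hf h01 hp hμ]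
  simp only [integral_const, probReal_univ, one_smul]
  ring

end ZeroOneValued

lemma integral_sum_sum {Ω ι κ : Type*} [MeasurableSpace Ω] {μ : Measure Ω} [Fintype ι]
    [Fintype κ] {F : ι → κ → Ω → ℝ} (hF : ∀ i j, Integrable (F i j) μ) :
    ∫ ω, ∑ i, ∑ j, F i j ω ∂μ = ∑ i, ∑ j, ∫ ω, F i j ω ∂μ := by
  rw [integral_finsetSum _ fun i _ => integrable_finsetSum _ fun j _ => hF i j]
  exact Finset.sum_congr rfl fun i _ => integral_finsetSum _ fun j _ => hF i j

lemma bernoulli_mean_shiftedLoss_eq {ρ : ℝ} (hρ : ρ ≠ 1) (p x : ℝ) :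
    (1 - (1 - ρ) * p) * shiftedLoss ρ x 0 + (1 - ρ) * p * shiftedLoss ρ x 1 =
      (1 - p) * (x - 0) ^ 2 + p * (x - 1) ^ 2 := by
  have hρ' : 1 - ρ ≠ 0 := sub_ne_zero.mpr hρ.symm
  simp only [shiftedLoss, zero_ne_one, if_false, if_true]
  field_simp
  ring

theorem shifted_loss_unbiased_general {m n : ℕ} {Ω : Type*} [MeasurableSpace Ω]
    (μ : Measure Ω) [IsProbabilityMeasure μ]
    (M : Fin m → Fin n → ℝ) (ρ : ℝ) (hρ1 : ρ < 1)
    (hM : ∀ i j, M i j ∈ Set.Icc (0 : ℝ) 1)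
    (A Y : Ω → Fin m → Fin n → ℝ)
    (hAmeas : ∀ i j, Measurable fun ω => A ω i j)
    (hYmeas : ∀ i j, Measurable fun ω => Y ω i j)
    (hA01 : ∀ ω i j, A ω i j = 0 ∨ A ω i j = 1)
    (hY01 : ∀ ω i j, Y ω i j = 0 ∨ Y ω i j = 1)
    (hAprob : ∀ i j, μ {ω | A ω i j = 1} = ENNReal.ofReal ((1 - ρ) * M i j))
    (hYprob : ∀ i j, μ {ω | Y ω i j = 1} = ENNReal.ofReal (M i j))
    (X : Fin m → Fin n → ℝ) :
    ∫ ω, ∑ i, ∑ j, (X i j - Y ω i j) ^ 2 ∂μ =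
      ∫ ω, ∑ i, ∑ j, shiftedLoss ρ (X i j) (A ω i j) ∂μ := by
  rw [integral_sum_sum fun i j => integrable_comp_of_eq_zero_or_eq_one (hYmeas i j)
      (hY01 · i j) fun y => (X i j - y) ^ 2,
    integral_sum_sum fun i j => integrable_comp_of_eq_zero_or_eq_one (hAmeas i j)
      (hA01 · i j) (shiftedLoss ρ (X i j))]
  refine Finset.sum_congr rfl fun i _ => Finset.sum_congr rfl fun j _ => ?_
  have hM0 : 0 ≤ M i j := (hM i j).1
  rw [integral_comp_of_eq_zero_or_eq_one (hYmeas i j) (hY01 · i j) hM0 (hYprob i j)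
      fun y => (X i j - y) ^ 2,
    integral_comp_of_eq_zero_or_eq_one (hAmeas i j) (hA01 · i j)
      (mul_nonneg (sub_nonneg.mpr hρ1.le) hM0) (hAprob i j) (shiftedLoss ρ (X i j)),
    bernoulli_mean_shiftedLoss_eq hρ1.ne]

/-- Unbiasedness of the shifted loss: if Y has Bernoulli(M_{ij}) entries and A has
    Bernoulli((1-ρ)M_{ij}) entries with A_{ij}=1 → Y_{ij}=1, then for any fixed X,
    E[Σ_{ij}(X_{ij}-Y_{ij})²] = E[Σ_{ij} ℓ̃(X_{ij},A_{ij})]. -/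
theorem shifted_loss_unbiased {m n : ℕ} {Ω : Type*} [MeasurableSpace Ω]
    (μ : Measure Ω) [IsProbabilityMeasure μ]
    (M : Fin m → Fin n → ℝ) (ρ : ℝ) (hρ0 : 0 ≤ ρ) (hρ1 : ρ < 1)
    (hM : ∀ i j, M i j ∈ Set.Icc (0 : ℝ) 1)
    (A Y : Ω → Fin m → Fin n → ℝ)
    (hAmeas : ∀ i j, Measurable fun ω => A ω i j)
    (hYmeas : ∀ i j, Measurable fun ω => Y ω i j)
    (hA01 : ∀ ω i j, A ω i j = 0 ∨ A ω i j = 1)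
    (hY01 : ∀ ω i j, Y ω i j = 0 ∨ Y ω i j = 1)
    (hAprob : ∀ i j, μ {ω | A ω i j = 1} = ENNReal.ofReal ((1 - ρ) * M i j))
    (hYprob : ∀ i j, μ {ω | Y ω i j = 1} = ENNReal.ofReal (M i j))
    (hcouple : ∀ ω i j, A ω i j = 1 → Y ω i j = 1)
    (X : Fin m → Fin n → ℝ) :
    ∫ ω, ∑ i, ∑ j, (X i j - Y ω i j) ^ 2 ∂μ =
      ∫ ω, ∑ i, ∑ j, shiftedLoss ρ (X i j) (A ω i j) ∂μ :=
  shifted_loss_unbiased_general μ M ρ hρ1 hM A Y hAmeas hYmeas hA01 hY01 hAprob hYprob X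
end

section
/- Fix ρ ∈ [0,1), threshold q, and α* = (1+ρ)/2. For a true label y ∈ {0,1}, let A be the noisy label (A=0 surely if y=0; if y=1 then A=1 with probability 1-ρ, A=0 with probability ρ). Define R_{α*,ρ}(x;y) = E_A[(1-α*)1[x>q]1[A=0] + α*1[x≤q]1[A=1]] and the clean 0-1 error R(x;y) = 1[thr(x) ≠ y] where thr(x) = 1[x>q]. Then there exists a constant b(y) independent of x such that R_{α*,ρ}(x;y) = a·R(x;y) + b(y) with a = (1-ρ)/2. Concretely: for y=0, R_{α*,ρ}(x;0) = (1-α*)·1[x>q] = ((1-ρ)/2)·R(x;0); for y=1, R_{α*,ρ}(x;1) = ρ(1-α*)·1[x>q] + (1-ρ)α*·1[x≤q], and R_{α*,ρ}(x;1) - R_{α*,ρ}(x';1) = ((1-ρ)/2)·(R(x;1) - R(x';1)) for all x, x'. Hence in both cases the α*-weighted noisy risk is an affine function of the clean 0-1 risk with the same slope a = (1-ρ)/2. -/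
/-- α*-weighted noisy 0-1 risk with α* = (1+ρ)/2 (expectation over the noisy label A). -/
noncomputable def wRisk01 (ρ q y x : ℝ) : ℝ :=
  if y = 1 then
    ρ * (1 - (1 + ρ) / 2) * (if q < x then (1 : ℝ) else 0) +
      (1 - ρ) * ((1 + ρ) / 2) * (if x ≤ q then (1 : ℝ) else 0)
  else (1 - (1 + ρ) / 2) * (if q < x then (1 : ℝ) else 0)

/-- Thresholding operator thr(x) = 1[x > q]. -/
noncomputable def thr (q x : ℝ) : ℝ := if q < x then 1 else 0

/-- Clean 0-1 error R(x;y) = 1[thr(x) ≠ y]. -/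
noncomputable def clean01 (q y x : ℝ) : ℝ := if thr q x = y then 0 else 1

/-- With α* = (1+ρ)/2, the α*-weighted noisy risk is an affine function of the clean
    0-1 risk with slope a = (1-ρ)/2, for both true labels y = 0 and y = 1. -/
theorem weighted_risk_affine_in_clean (ρ q : ℝ) (hρ0 : 0 ≤ ρ) (hρ1 : ρ < 1) :
    (∀ x : ℝ, wRisk01 ρ q 0 x = ((1 - ρ) / 2) * clean01 q 0 x) ∧
    (∀ x x' : ℝ, wRisk01 ρ q 1 x - wRisk01 ρ q 1 x' =
      ((1 - ρ) / 2) * (clean01 q 1 x - clean01 q 1 x')) ∧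
    ∃ b : ℝ → ℝ, ∀ y : ℝ, y = 0 ∨ y = 1 → ∀ x : ℝ,
      wRisk01 ρ q y x = ((1 - ρ) / 2) * clean01 q y x + b y := by
  have e1 : ∀ x : ℝ, q < x →
      wRisk01 ρ q 1 x = ((1 - ρ) / 2) * clean01 q 1 x + ρ * (1 - ρ) / 2 := by
    intro x h
    simp [wRisk01, clean01, thr, h, not_le.mpr h]
    ring
  have e2 : ∀ x : ℝ, x ≤ q →
      wRisk01 ρ q 1 x = ((1 - ρ) / 2) * clean01 q 1 x + ρ * (1 - ρ) / 2 := by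
    intro x h
    simp [wRisk01, clean01, thr, not_lt.mpr h, h]
    ring
  have e0 : ∀ x : ℝ, wRisk01 ρ q 0 x = ((1 - ρ) / 2) * clean01 q 0 x := by
    intro x
    rcases lt_or_ge q x with h | h
    · simp [wRisk01, clean01, thr, h]
      ring
    · simp [wRisk01, clean01, thr, not_lt.mpr h]
  have eaff : ∀ x : ℝ,
      wRisk01 ρ q 1 x = ((1 - ρ) / 2) * clean01 q 1 x + ρ * (1 - ρ) / 2 := by
    intro x
    rcases lt_or_ge q x with h | h
    · exact e1 x h
    · exact e2 x h
  refine ⟨e0, ?_, ⟨fun y => if y = 1 then ρ * (1 - ρ) / 2 else 0, ?_⟩⟩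
  · intro x x'
    rw [eaff x, eaff x']
    ring
  · rintro y (rfl | rfl) x
    · simpa using e0 x
    · simpa using eaff x
end
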